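/- (Lemma 4.1, EAKF/ETKF case.) Let g : ℝ^d → ℝ^p be Lipschitz with constant L and C ∈ ℝ^{p×p} symmetric positive definite. For every M ≥ 2 and any two ensembles X^(1),…,X^(M) and Y^(1),…,Y^(M) in ℝ^d, the half-gains K̂_X := (1/(2(M−1))) E_X 𝒢_Xᵀ C⁻¹ and K_Y := (1/(M−1)) E_Y 𝒢_Yᵀ C⁻¹ satisfy ‖K̂_X − (1/2) K_Y‖ ≤ L ‖C⁻¹‖ (tr(P_X)^{1/2} + tr(P_Y)^{1/2}) · ((1/(M−1)) Σ_{i=1}^M ‖X^(i) − Y^(i)‖²)^{1/2}. -/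

import Mathlib

/-!
With `E`, `G` the deviation matrices of the ensembles and of their images under `g`,
`E_X G_Xᵀ − E_Y G_Yᵀ = E_X (G_X − G_Y)ᵀ + (E_X − E_Y) G_Yᵀ`, and the spectral norm of each factor
is at most its Frobenius norm, the square root of the scatter `∑ᵢ ‖Z⁽ⁱ⁾ − z̄‖²` of the ensemble
behind it. Since the mean minimises `c ↦ ∑ᵢ ‖Z⁽ⁱ⁾ − c‖²`, the scatter of `X − Y` is at most
`∑ᵢ ‖X⁽ⁱ⁾ − Y⁽ⁱ⁾‖²`, and the Lipschitz bound on `g` controls the scatter of `g ∘ X − g ∘ Y` by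
`L² ∑ᵢ ‖X⁽ⁱ⁾ − Y⁽ⁱ⁾‖²` and that of `g ∘ Y` by `L²` times the scatter of `Y`. Dividing by
`2 (M − 1)` gives the bound, even with an extra factor `1/2`.
-/

open Matrix MeasureTheory
open scoped Matrix.Norms.L2Operator NNReal RealInnerProductSpace

/-- The ensemble mean `x̄ = (1/M) ∑ᵢ X⁽ⁱ⁾`. -/
noncomputable def ensMean {d M : ℕ} (X : Fin M → EuclideanSpace ℝ (Fin d)) :
    EuclideanSpace ℝ (Fin d) :=
  (M : ℝ)⁻¹ • ∑ i, X i

/-- The matrix of ensemble deviations, with columns `X⁽ⁱ⁾ − x̄`. -/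
noncomputable def devMat {d M : ℕ} (X : Fin M → EuclideanSpace ℝ (Fin d)) :
    Matrix (Fin d) (Fin M) ℝ :=
  Matrix.of fun j i => (X i - ensMean X) j

/-- The trace of the empirical covariance matrix,
`tr(P) = (1/(M−1)) ∑ᵢ ‖X⁽ⁱ⁾ − x̄‖²`. -/
noncomputable def trP {d M : ℕ} (X : Fin M → EuclideanSpace ℝ (Fin d)) : ℝ :=
  ((M : ℝ) - 1)⁻¹ * ∑ i, ‖X i - ensMean X‖ ^ 2

open Finset

theorem Real.sqrt_le_mul_sqrt_of_le_sq_mul {a b L : ℝ} (hL : 0 ≤ L) (h : a ≤ L ^ 2 * b) :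
    √a ≤ L * √b :=
  (Real.sqrt_le_sqrt h).trans_eq (by rw [Real.sqrt_mul (sq_nonneg L), Real.sqrt_sq hL])

theorem Matrix.l2_opNorm_le_sqrt_sum_sq {m n : Type*} [Fintype m] [Fintype n] [DecidableEq n]
    (A : Matrix m n ℝ) : ‖A‖ ≤ √(∑ i, ∑ j, A i j ^ 2) := by
  rw [l2_opNorm_def]
  refine ContinuousLinearMap.opNorm_le_bound _ (by positivity) fun x => ?_
  have hrow : ∀ i, (A *ᵥ x) i ^ 2 ≤ (∑ j, A i j ^ 2) * ‖x‖ ^ 2 := fun i => by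
    rw [EuclideanSpace.real_norm_sq_eq]
    exact sum_mul_sq_le_sq_mul_sq _ _ _
  calc ‖toEuclideanLin A x‖ = √(∑ i, (A *ᵥ x) i ^ 2) := EuclideanSpace.norm_eq _ |>.trans (by simp)
    _ ≤ √((∑ i, ∑ j, A i j ^ 2) * ‖x‖ ^ 2) := by
        rw [sum_mul]; exact Real.sqrt_le_sqrt (sum_le_sum fun i _ => hrow i)
    _ = _ := by rw [Real.sqrt_mul (by positivity), Real.sqrt_sq (norm_nonneg x)]

section Ensemble

variable {d p M : ℕ}

noncomputable def scatter (X : Fin M → EuclideanSpace ℝ (Fin d)) : ℝ :=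
  ∑ i, ‖X i - ensMean X‖ ^ 2

theorem trP_eq_inv_mul_scatter (X : Fin M → EuclideanSpace ℝ (Fin d)) :
    trP X = ((M : ℝ) - 1)⁻¹ * scatter X :=
  rfl

theorem ensMean_sub (X Y : Fin M → EuclideanSpace ℝ (Fin d)) :
    ensMean (X - Y) = ensMean X - ensMean Y := by
  simp [ensMean, sum_sub_distrib, smul_sub]

theorem devMat_sub (X Y : Fin M → EuclideanSpace ℝ (Fin d)) :
    devMat (X - Y) = devMat X - devMat Y := by
  ext j i
  simp only [devMat, ensMean_sub, Matrix.of_apply, Matrix.sub_apply, Pi.sub_apply, PiLp.sub_apply]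
  ring

theorem sum_sub_ensMean (X : Fin M → EuclideanSpace ℝ (Fin d)) : ∑ i, (X i - ensMean X) = 0 := by
  rcases M.eq_zero_or_pos with rfl | hM
  · simp
  rw [sum_sub_distrib, sum_const, card_univ, Fintype.card_fin, ensMean, ← Nat.cast_smul_eq_nsmul ℝ,
    smul_smul, mul_inv_cancel₀ (by positivity), one_smul, sub_self]

theorem sum_norm_sub_sq_eq_scatter_add (X : Fin M → EuclideanSpace ℝ (Fin d))
    (c : EuclideanSpace ℝ (Fin d)) :
    ∑ i, ‖X i - c‖ ^ 2 = scatter X + M * ‖ensMean X - c‖ ^ 2 := by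
  have hsplit : ∀ i, ‖X i - c‖ ^ 2 = ‖X i - ensMean X‖ ^ 2
      + 2 * ⟪X i - ensMean X, ensMean X - c⟫ + ‖ensMean X - c‖ ^ 2 := fun i => by
    rw [← sub_add_sub_cancel (X i) (ensMean X) c, norm_add_sq_real]
  rw [sum_congr rfl fun i _ => hsplit i, sum_add_distrib, sum_add_distrib, ← mul_sum, ← sum_inner,
    sum_sub_ensMean, inner_zero_left, sum_const, card_univ, Fintype.card_fin, nsmul_eq_mul,
    scatter]
  ring

theorem scatter_le_sum_norm_sub_sq (X : Fin M → EuclideanSpace ℝ (Fin d))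
    (c : EuclideanSpace ℝ (Fin d)) : scatter X ≤ ∑ i, ‖X i - c‖ ^ 2 := by
  rw [sum_norm_sub_sq_eq_scatter_add X c]
  exact le_add_of_nonneg_right (by positivity)

theorem scatter_sub_le (X Y : Fin M → EuclideanSpace ℝ (Fin d)) :
    scatter (X - Y) ≤ ∑ i, ‖X i - Y i‖ ^ 2 := by
  simpa using scatter_le_sum_norm_sub_sq (X - Y) 0

namespace LipschitzWith

variable {L : ℝ≥0} {g : EuclideanSpace ℝ (Fin d) → EuclideanSpace ℝ (Fin p)}

theorem sum_norm_sub_sq_le (hg : LipschitzWith L g) (X Y : Fin M → EuclideanSpace ℝ (Fin d)) :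
    ∑ i, ‖g (X i) - g (Y i)‖ ^ 2 ≤ (L : ℝ) ^ 2 * ∑ i, ‖X i - Y i‖ ^ 2 := by
  rw [mul_sum]
  refine sum_le_sum fun i _ => ?_
  rw [← mul_pow]
  exact pow_le_pow_left₀ (norm_nonneg _) (hg.norm_sub_le (X i) (Y i)) 2

theorem scatter_comp_le (hg : LipschitzWith L g) (X : Fin M → EuclideanSpace ℝ (Fin d)) :
    scatter (g ∘ X) ≤ (L : ℝ) ^ 2 * scatter X :=
  (scatter_le_sum_norm_sub_sq (g ∘ X) (g (ensMean X))).trans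
    (hg.sum_norm_sub_sq_le X fun _ => ensMean X)

theorem scatter_comp_sub_comp_le (hg : LipschitzWith L g)
    (X Y : Fin M → EuclideanSpace ℝ (Fin d)) :
    scatter (g ∘ X - g ∘ Y) ≤ (L : ℝ) ^ 2 * ∑ i, ‖X i - Y i‖ ^ 2 :=
  (scatter_sub_le (g ∘ X) (g ∘ Y)).trans (hg.sum_norm_sub_sq_le X Y)

end LipschitzWith

theorem norm_devMat_le (X : Fin M → EuclideanSpace ℝ (Fin d)) : ‖devMat X‖ ≤ √(scatter X) := by
  refine (devMat X).l2_opNorm_le_sqrt_sum_sq.trans_eq ?_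
  rw [sum_comm]
  simp [devMat, scatter, EuclideanSpace.real_norm_sq_eq]

theorem norm_devMat_transpose_le (X : Fin M → EuclideanSpace ℝ (Fin d)) :
    ‖(devMat X)ᵀ‖ ≤ √(scatter X) := by
  rw [← Matrix.conjTranspose_eq_transpose_of_trivial, Matrix.l2_opNorm_conjTranspose]
  exact norm_devMat_le X

theorem norm_devMat_mul_transpose_sub_le {L : ℝ≥0}
    {g : EuclideanSpace ℝ (Fin d) → EuclideanSpace ℝ (Fin p)} (hg : LipschitzWith L g)
    (X Y : Fin M → EuclideanSpace ℝ (Fin d)) :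
    ‖devMat X * (devMat (g ∘ X))ᵀ - devMat Y * (devMat (g ∘ Y))ᵀ‖ ≤
      L * (√(scatter X) + √(scatter Y)) * √(∑ i, ‖X i - Y i‖ ^ 2) := by
  have hsplit : devMat X * (devMat (g ∘ X))ᵀ - devMat Y * (devMat (g ∘ Y))ᵀ =
      devMat X * (devMat (g ∘ X - g ∘ Y))ᵀ + devMat (X - Y) * (devMat (g ∘ Y))ᵀ := by
    rw [devMat_sub, devMat_sub, Matrix.transpose_sub, Matrix.mul_sub, Matrix.sub_mul]
    abel
  have hgXY := (norm_devMat_transpose_le (g ∘ X - g ∘ Y)).trans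
    (Real.sqrt_le_mul_sqrt_of_le_sq_mul L.coe_nonneg (hg.scatter_comp_sub_comp_le X Y))
  have hgY := (norm_devMat_transpose_le (g ∘ Y)).trans
    (Real.sqrt_le_mul_sqrt_of_le_sq_mul L.coe_nonneg (hg.scatter_comp_le Y))
  have hXY := (norm_devMat_le (X - Y)).trans (Real.sqrt_le_sqrt (scatter_sub_le X Y))
  calc _ ≤ ‖devMat X‖ * ‖(devMat (g ∘ X - g ∘ Y))ᵀ‖ +
          ‖devMat (X - Y)‖ * ‖(devMat (g ∘ Y))ᵀ‖ := by
        rw [hsplit]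
        exact (norm_add_le _ _).trans
          (add_le_add (Matrix.l2_opNorm_mul _ _) (Matrix.l2_opNorm_mul _ _))
    _ ≤ √(scatter X) * (L * √(∑ i, ‖X i - Y i‖ ^ 2)) +
          √(∑ i, ‖X i - Y i‖ ^ 2) * (L * √(scatter Y)) := by
        gcongr
        exact norm_devMat_le X
    _ = _ := by ring

end Ensemble

theorem half_gain_difference_bound_general {d p M : ℕ} (hM : 2 ≤ M) (L : ℝ≥0)
    (g : EuclideanSpace ℝ (Fin d) → EuclideanSpace ℝ (Fin p)) (hg : LipschitzWith L g)
    (C : Matrix (Fin p) (Fin p) ℝ)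
    (X Y : Fin M → EuclideanSpace ℝ (Fin d)) :
    ‖(2 * ((M : ℝ) - 1))⁻¹ • (devMat X * (devMat (g ∘ X))ᵀ * C⁻¹) -
        (2 : ℝ)⁻¹ • (((M : ℝ) - 1)⁻¹ • (devMat Y * (devMat (g ∘ Y))ᵀ * C⁻¹))‖ ≤
      (L : ℝ) * ‖C⁻¹‖ * (Real.sqrt (trP X) + Real.sqrt (trP Y)) *
        Real.sqrt (((M : ℝ) - 1)⁻¹ * ∑ i, ‖X i - Y i‖ ^ 2) := by
  have hm : (0 : ℝ) < (M : ℝ) - 1 := by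
    have : (2 : ℝ) ≤ M := by exact_mod_cast hM
    linarith
  set Δ := devMat X * (devMat (g ∘ X))ᵀ - devMat Y * (devMat (g ∘ Y))ᵀ
  set B := (L : ℝ) * (√(scatter X) + √(scatter Y)) * √(∑ i, ‖X i - Y i‖ ^ 2)
  have hk : √((M - 1 : ℝ)⁻¹) * √((M - 1 : ℝ)⁻¹) = ((M : ℝ) - 1)⁻¹ :=
    Real.mul_self_sqrt (inv_nonneg.mpr hm.le)
  calc _ = (2 * ((M : ℝ) - 1))⁻¹ * ‖Δ * C⁻¹‖ := by
        rw [smul_smul, ← mul_inv, ← smul_sub, ← Matrix.sub_mul,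
          norm_smul_of_nonneg (by positivity)]
    _ ≤ (2 * ((M : ℝ) - 1))⁻¹ * (B * ‖C⁻¹‖) := by
        gcongr
        exact (Matrix.l2_opNorm_mul Δ C⁻¹).trans
          (by gcongr; exact norm_devMat_mul_transpose_sub_le hg X Y)
    _ ≤ ((M : ℝ) - 1)⁻¹ * (B * ‖C⁻¹‖) := by
        gcongr
        linarith
    _ = _ := by
        simp only [trP_eq_inv_mul_scatter, Real.sqrt_mul (inv_nonneg.mpr hm.le), B]
        linear_combination -(B * ‖C⁻¹‖) * hk

/-- Lemma 4.1, EAKF/ETKF case: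
`‖K̂_X − (1/2) K_Y‖ ≤ L ‖C⁻¹‖ (tr(P_X)^{1/2} + tr(P_Y)^{1/2})
((1/(M−1)) ∑ᵢ ‖X⁽ⁱ⁾ − Y⁽ⁱ⁾‖²)^{1/2}`. -/
theorem half_gain_difference_bound {d p M : ℕ} (hM : 2 ≤ M) (L : ℝ≥0)
    (g : EuclideanSpace ℝ (Fin d) → EuclideanSpace ℝ (Fin p)) (hg : LipschitzWith L g)
    (C : Matrix (Fin p) (Fin p) ℝ) (hC : C.PosDef)
    (X Y : Fin M → EuclideanSpace ℝ (Fin d)) :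
    ‖(2 * ((M : ℝ) - 1))⁻¹ • (devMat X * (devMat (g ∘ X))ᵀ * C⁻¹) -
        (2 : ℝ)⁻¹ • (((M : ℝ) - 1)⁻¹ • (devMat Y * (devMat (g ∘ Y))ᵀ * C⁻¹))‖ ≤
      (L : ℝ) * ‖C⁻¹‖ * (Real.sqrt (trP X) + Real.sqrt (trP Y)) *
        Real.sqrt (((M : ℝ) - 1)⁻¹ * ∑ i, ‖X i - Y i‖ ^ 2) :=
  half_gain_difference_bound_general hM L g hg C X Y
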